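/- arXiv:1310.7055 — 4 statements merged into one kernel-verified Lean document; each statement's English description precedes it below -/
import Mathlib

section
/- Let n ≥ 1, c ≥ 1 be integers and let ω = (t_1, t_2, …) be a strictly increasing sequence of positive reals. Set b := B(c,n)(ω) and i := b − c, and let a(i,n) := Σ_{0 ≤ j < i} f(j/n). Then a(i,n) ≤ t_c ≤ a(i,n) + c·f(i/n). -/
open MeasureTheory Filter Topology
open scoped ENNReal NNReal

/-- The function `f(p) = -log(1-p)` for `0 ≤ p < 1`, `f(1) = ∞`, evaluated at `p = i/n`,
taking values in `ℝ≥0∞`. -/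
noncomputable def fE (n : ℕ) (i : ℕ) : ℝ≥0∞ :=
  if i < n then ENNReal.ofReal (-Real.log (1 - (i : ℝ) / n)) else ⊤

/-- The embedded collision process: `Bemb n t c` is `B(c,n)(ω)` for the strictly increasing
sequence `ω = (t 1, t 2, …)` of positive reals (with `t 0 = 0`). -/
noncomputable def Bemb (n : ℕ) (t : ℕ → ℝ) : ℕ → ℕ
  | 0 => 0
  | c + 1 =>
      Bemb n t c +
        sInf {j : ℕ | 1 ≤ j ∧
          ENNReal.ofReal (t (c + 1) - t c) ≤
            ∑ i ∈ Finset.Ico (Bemb n t c - c) (Bemb n t c - c + j), fE n i}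

/-- `a(i,n) = Σ_{0 ≤ j < i} f(j/n)`. -/
noncomputable def aE (i n : ℕ) : ℝ≥0∞ := ∑ j ∈ Finset.range i, fE n j

/-
By induction on `c`, with `I = B(c,n) − c`. The `(c+1)`-st step advances `I` by `j − 1`, where `j`
is the least block length whose sum of `f` from `I` reaches `t_{c+1} − t_c`: minimality puts the
block of length `j − 1` below that gap, and appending one more term `f((I+j−1)/n)` puts it above.
Adding this to the bounds for `t_c` and using that `f` is monotone, so `c·f(I/n) ≤ c·f((I+j−1)/n)`,
gives the bounds for `t_{c+1}`.
-/

open Finset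

-- `0` (as `sInf ∅`) when no block from `J` reaches `r`.
noncomputable def firstPassage (g : ℕ → ℝ≥0∞) (J : ℕ) (r : ℝ≥0∞) : ℕ :=
  sInf {j : ℕ | 1 ≤ j ∧ r ≤ ∑ i ∈ Ico J (J + j), g i}

section firstPassage

variable {g : ℕ → ℝ≥0∞} {J : ℕ} {r : ℝ≥0∞}

lemma one_le_firstPassage (h : ∃ j, 1 ≤ j ∧ r ≤ ∑ i ∈ Ico J (J + j), g i) :
    1 ≤ firstPassage g J r :=
  (Nat.sInf_mem h).1

lemma sum_Ico_firstPassage_pred_le : ∑ i ∈ Ico J (J + (firstPassage g J r - 1)), g i ≤ r := by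
  by_cases hj : firstPassage g J r - 1 = 0
  · simp [hj]
  · have hnot : firstPassage g J r - 1 ∉ {j : ℕ | 1 ≤ j ∧ r ≤ ∑ i ∈ Ico J (J + j), g i} :=
      Nat.notMem_of_lt_sInf (by unfold firstPassage at hj ⊢; omega)
    simp only [Set.mem_ofPred_eq, not_and, not_le] at hnot
    exact (hnot (by omega)).le

lemma le_sum_Ico_firstPassage_pred_add (h : ∃ j, 1 ≤ j ∧ r ≤ ∑ i ∈ Ico J (J + j), g i) :
    r ≤ ∑ i ∈ Ico J (J + (firstPassage g J r - 1)), g i + g (J + (firstPassage g J r - 1)) := by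
  have hsucc : J + firstPassage g J r = J + (firstPassage g J r - 1) + 1 := by
    have := one_le_firstPassage h; omega
  rw [← sum_Ico_succ_top (by omega), ← hsucc]
  exact (Nat.sInf_mem h).2

end firstPassage

lemma fE_mono (n : ℕ) : Monotone (fE n) := by
  intro i j hij
  unfold fE
  by_cases hj : j < n
  · have hn : (0 : ℝ) < n := by exact_mod_cast (show 0 < n by omega)
    have hpos : (0 : ℝ) < 1 - (j : ℝ) / n := by
      rw [sub_pos, div_lt_one hn]; exact_mod_cast hj
    rw [if_pos (hij.trans_lt hj), if_pos hj]
    gcongr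
  · rw [if_neg hj]; exact le_top

lemma exists_le_sum_Ico_fE (n J : ℕ) (r : ℝ≥0∞) :
    ∃ j, 1 ≤ j ∧ r ≤ ∑ i ∈ Ico J (J + j), fE n i := by
  refine ⟨n + 1, by omega, ?_⟩
  have hterm : fE n (J + n) = ⊤ := if_neg (by omega)
  rw [ENNReal.sum_eq_top.2 ⟨J + n, by simp, hterm⟩]
  exact le_top

lemma aE_add (i k n : ℕ) : aE (i + k) n = aE i n + ∑ j ∈ Ico i (i + k), fE n j :=
  (sum_range_add_sum_Ico _ (Nat.le_add_right i k)).symm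

section Bemb

variable (n : ℕ) (t : ℕ → ℝ)

lemma Bemb_succ (c : ℕ) :
    Bemb n t (c + 1) =
      Bemb n t c + firstPassage (fE n) (Bemb n t c - c) (ENNReal.ofReal (t (c + 1) - t c)) :=
  rfl

lemma le_Bemb (c : ℕ) : c ≤ Bemb n t c := by
  induction c with
  | zero => exact le_rfl
  | succ c ih =>
    have := one_le_firstPassage (exists_le_sum_Ico_fE n (Bemb n t c - c)
      (ENNReal.ofReal (t (c + 1) - t c)))
    rw [Bemb_succ]; omega

lemma Bemb_succ_sub (c : ℕ) :
    Bemb n t (c + 1) - (c + 1) =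
      (Bemb n t c - c) +
        (firstPassage (fE n) (Bemb n t c - c) (ENNReal.ofReal (t (c + 1) - t c)) - 1) := by
  have := one_le_firstPassage (exists_le_sum_Ico_fE n (Bemb n t c - c)
    (ENNReal.ofReal (t (c + 1) - t c)))
  have := le_Bemb n t c
  rw [Bemb_succ]; omega

lemma aE_le_ofReal_and_ofReal_le_aE_add (ht : StrictMono t) (ht0 : t 0 = 0) (c : ℕ) :
    aE (Bemb n t c - c) n ≤ ENNReal.ofReal (t c) ∧
      ENNReal.ofReal (t c) ≤ aE (Bemb n t c - c) n + c * fE n (Bemb n t c - c) := by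
  induction c with
  | zero => simp [Bemb, aE, ht0]
  | succ c ih =>
    obtain ⟨hlow, hup⟩ := ih
    set I := Bemb n t c - c
    set Δ := ENNReal.ofReal (t (c + 1) - t c)
    set k := firstPassage (fE n) I Δ - 1
    have hsplit : ENNReal.ofReal (t (c + 1)) = ENNReal.ofReal (t c) + Δ := by
      rw [← ENNReal.ofReal_add (ht0 ▸ ht.monotone c.zero_le) (sub_nonneg.2 (ht c.lt_succ_self).le),
        add_sub_cancel]
    have hblock : ∑ j ∈ Ico I (I + k), fE n j ≤ Δ := sum_Ico_firstPassage_pred_le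
    have hgap : Δ ≤ ∑ j ∈ Ico I (I + k), fE n j + fE n (I + k) :=
      le_sum_Ico_firstPassage_pred_add (exists_le_sum_Ico_fE n I Δ)
    have hmono : (c : ℝ≥0∞) * fE n I ≤ c * fE n (I + k) :=
      mul_le_mul_right (fE_mono n (Nat.le_add_right I k)) c
    rw [Bemb_succ_sub, aE_add, hsplit]
    refine ⟨add_le_add hlow hblock, ?_⟩
    calc ENNReal.ofReal (t c) + Δ
        ≤ (aE I n + c * fE n (I + k)) + (∑ j ∈ Ico I (I + k), fE n j + fE n (I + k)) :=
          add_le_add (hup.trans (add_le_add_right hmono _)) hgap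
      _ = aE I n + ∑ j ∈ Ico I (I + k), fE n j + ((c + 1 : ℕ) : ℝ≥0∞) * fE n (I + k) := by
          push_cast; ring

end Bemb

theorem stmt_1_general (n c : ℕ)
    (t : ℕ → ℝ) (ht : StrictMono t) (ht0 : t 0 = 0) :
    aE (Bemb n t c - c) n ≤ ENNReal.ofReal (t c) ∧
      ENNReal.ofReal (t c) ≤ aE (Bemb n t c - c) n + c * fE n (Bemb n t c - c) :=
  aE_le_ofReal_and_ofReal_le_aE_add n t ht ht0 c

theorem stmt_1 (n c : ℕ) (hn : 1 ≤ n) (hc : 1 ≤ c)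
    (t : ℕ → ℝ) (ht : StrictMono t) (ht0 : t 0 = 0) :
    aE (Bemb n t c - c) n ≤ ENNReal.ofReal (t c) ∧
      ENNReal.ofReal (t c) ≤ aE (Bemb n t c - c) n + c * fE n (Bemb n t c - c) :=
  stmt_1_general n c t ht ht0
end

section
/- Let ω = (t_1, t_2, …) be a strictly increasing sequence of positive reals satisfying 0 < inf_{c ≥ 1} t_c/c and sup_{c ≥ 1} t_c/c < ∞. Then for every constant C < ∞ and every α ∈ (0, 1/3), there exist K < ∞ and n₀ such that for all n ≥ n₀: max over integers c with 1 ≤ c ≤ C·n^α of |B(c,n)(ω)²/(2n) − t_c| is at most K·n^{(3α−1)/2}. -/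
open MeasureTheory Filter Topology
open scoped ENNReal NNReal

/-!
Write `B(c,n) = m_c + c` and `F(m) = ∑_{i<m} f(i/n)`. The `c`-th step of the recursion moves
`m` to the first `i` with `∑_{m ≤ k ≤ i} f(k/n) ≥ t_c - t_{c-1}`, so by induction
`F(m_c) ≤ t_c ≤ F(m_c) + c f(m_c/n)`. Since `p ≤ f(p) ≤ p/(1-p)`, `F(m)` lies between
`m(m-1)/(2n)` and `m(m-1)/(2(n-m))`. With `t_c ≤ U c ≤ U C n^α` the lower bound gives
`B(c,n) = O(n^((1+α)/2)) = o(n)`, and then both bounds squeeze `B(c,n)²/(2n) - t_c` to order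
`B c/n + B³/n² = O(n^((3α-1)/2))`.
-/

open Finset

lemma fE_eq_top_of_le {n i : ℕ} (h : n ≤ i) : fE n i = ⊤ := if_neg (not_lt.2 h)

lemma le_neg_log_one_sub {p : ℝ} (hp : p < 1) : p ≤ -Real.log (1 - p) := by
  linarith [Real.log_le_sub_one_of_pos (sub_pos.2 hp)]

lemma neg_log_one_sub_le {p : ℝ} (hp : p < 1) : -Real.log (1 - p) ≤ p / (1 - p) := by
  have h := Real.one_sub_inv_le_log_of_pos (sub_pos.2 hp)
  have e : p / (1 - p) = (1 - p)⁻¹ - 1 := by field_simp [(sub_pos.2 hp).ne']; ring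
  linarith

lemma natCast_div_lt_one {i n : ℕ} (hi : i < n) : (i : ℝ) / n < 1 :=
  (div_lt_one (by exact_mod_cast (Nat.zero_le i).trans_lt hi)).2 (by exact_mod_cast hi)

lemma ofReal_div_le_fE (n i : ℕ) : ENNReal.ofReal ((i : ℝ) / n) ≤ fE n i := by
  by_cases hi : i < n
  · rw [fE, if_pos hi]
    exact ENNReal.ofReal_le_ofReal (le_neg_log_one_sub (natCast_div_lt_one hi))
  · exact (fE_eq_top_of_le (not_lt.1 hi)).symm ▸ le_top

lemma fE_le_ofReal {n i : ℕ} (hi : i < n) : fE n i ≤ ENNReal.ofReal ((i : ℝ) / (n - i)) := by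
  rw [fE, if_pos hi]
  refine ENNReal.ofReal_le_ofReal ((neg_log_one_sub_le (natCast_div_lt_one hi)).trans_eq ?_)
  have hin : (i : ℝ) < n := by exact_mod_cast hi
  have hn : (0 : ℝ) < n := by exact_mod_cast (Nat.zero_le i).trans_lt hi
  field_simp [(sub_pos.2 hin).ne', hn.ne']

lemma sum_range_natCast (m : ℕ) : ∑ i ∈ range m, (i : ℝ) = m * (m - 1) / 2 := by
  induction m with
  | zero => simp
  | succ k ih => rw [sum_range_succ, ih]; push_cast; ring

lemma ofReal_le_sum_range_fE (n m : ℕ) :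
    ENNReal.ofReal ((m : ℝ) * (m - 1) / (2 * n)) ≤ ∑ i ∈ range m, fE n i := by
  have e : (m : ℝ) * (m - 1) / (2 * n) = ∑ i ∈ range m, (i : ℝ) / n := by
    rw [← sum_div, sum_range_natCast, div_div, mul_comm (2 : ℝ)]
  rw [e, ENNReal.ofReal_sum_of_nonneg fun i _ => by positivity]
  exact sum_le_sum fun i _ => ofReal_div_le_fE n i

lemma sum_range_fE_le_ofReal {n m : ℕ} (h : m < n) :
    ∑ i ∈ range m, fE n i ≤ ENNReal.ofReal ((m : ℝ) * (m - 1) / (2 * (n - m))) := by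
  have hmn : (0 : ℝ) < n - m := sub_pos.2 (by exact_mod_cast h)
  have e : (m : ℝ) * (m - 1) / (2 * (n - m)) = ∑ i ∈ range m, (i : ℝ) / (n - m) := by
    rw [← sum_div, sum_range_natCast, div_div, mul_comm (2 : ℝ)]
  rw [e, ENNReal.ofReal_sum_of_nonneg fun i _ => div_nonneg (Nat.cast_nonneg i) hmn.le]
  refine sum_le_sum fun i hi => (fE_le_ofReal ((mem_range.1 hi).trans h)).trans ?_
  have hi : (i : ℝ) < m := by exact_mod_cast mem_range.1 hi
  exact ENNReal.ofReal_le_ofReal (div_le_div_of_nonneg_left (Nat.cast_nonneg i) hmn (by linarith))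

lemma sum_Ico_pred_le_of_isLeast {g : ℕ → ℝ≥0∞} {a j : ℕ} {x : ℝ≥0∞}
    (h : IsLeast {j : ℕ | 1 ≤ j ∧ x ≤ ∑ i ∈ Ico a (a + j), g i} j) :
    ∑ i ∈ Ico a (a + (j - 1)), g i ≤ x := by
  rcases Nat.lt_or_ge (j - 1) 1 with hj | hj
  · simp [show j - 1 = 0 by omega]
  · by_contra! hlt
    have := h.2 ⟨hj, hlt.le⟩
    have := h.1.1
    omega

lemma sum_range_bounds_of_isLeast {g : ℕ → ℝ≥0∞} (hg : Monotone g) {m j c : ℕ} {x y : ℝ≥0∞}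
    (hj : IsLeast {j : ℕ | 1 ≤ j ∧ y ≤ ∑ i ∈ Ico m (m + j), g i} j)
    (hlow : ∑ i ∈ range m, g i ≤ x) (hup : x ≤ ∑ i ∈ range m, g i + c * g m) :
    ∑ i ∈ range (m + (j - 1)), g i ≤ x + y ∧
      x + y ≤ ∑ i ∈ range (m + (j - 1)), g i + (c + 1 : ℕ) * g (m + (j - 1)) := by
  have hsplit : ∑ i ∈ range (m + (j - 1)), g i =
      ∑ i ∈ range m, g i + ∑ i ∈ Ico m (m + (j - 1)), g i :=
    (sum_range_add_sum_Ico _ le_self_add).symm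
  have hlast : ∑ i ∈ Ico m (m + j), g i =
      ∑ i ∈ Ico m (m + (j - 1)), g i + g (m + (j - 1)) := by
    rw [← sum_Ico_succ_top le_self_add]
    congr 2
    have := hj.1.1
    omega
  refine ⟨hsplit ▸ add_le_add hlow (sum_Ico_pred_le_of_isLeast hj), ?_⟩
  calc x + y ≤ ∑ i ∈ range m, g i + c * g m + ∑ i ∈ Ico m (m + j), g i := add_le_add hup hj.1.2
    _ = ∑ i ∈ range (m + (j - 1)), g i + g (m + (j - 1)) + c * g m := by
        rw [hlast, hsplit]; ring
    _ ≤ ∑ i ∈ range (m + (j - 1)), g i + g (m + (j - 1)) + c * g (m + (j - 1)) := by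
        gcongr; exact hg le_self_add
    _ = _ := by push_cast; ring

lemma exists_Bemb_eq_add_sum_bounds (n : ℕ) {t : ℕ → ℝ} (ht : Monotone t) (ht0 : t 0 = 0)
    (c : ℕ) : ∃ m : ℕ, Bemb n t c = m + c ∧ ∑ i ∈ range m, fE n i ≤ ENNReal.ofReal (t c) ∧
      ENNReal.ofReal (t c) ≤ ∑ i ∈ range m, fE n i + c * fE n m := by
  induction c with
  | zero => exact ⟨0, rfl, by simp [ht0], by simp [ht0]⟩
  | succ c ih =>
    obtain ⟨m, hB, hlow, hup⟩ := ih
    set S := {j : ℕ | 1 ≤ j ∧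
      ENNReal.ofReal (t (c + 1) - t c) ≤ ∑ i ∈ Ico m (m + j), fE n i}
    have hS : S.Nonempty := by
      refine ⟨n + 1, le_add_self, le_top.trans_eq (ENNReal.sum_eq_top.2 ?_).symm⟩
      exact ⟨m + n, mem_Ico.2 ⟨le_self_add, by omega⟩, fE_eq_top_of_le le_add_self⟩
    obtain ⟨j, hj⟩ : ∃ j, IsLeast S j := ⟨_, isLeast_csInf hS⟩
    have hBsucc : Bemb n t (c + 1) = m + (j - 1) + (c + 1) := by
      rw [Bemb.eq_2, hB, Nat.add_sub_cancel, hj.csInf_eq]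
      have := hj.1.1
      omega
    have htc : ENNReal.ofReal (t (c + 1)) =
        ENNReal.ofReal (t c) + ENNReal.ofReal (t (c + 1) - t c) := by
      rw [← ENNReal.ofReal_add (ht0 ▸ ht (Nat.zero_le c)) (sub_nonneg.2 (ht c.le_succ)),
        add_sub_cancel]
    rw [htc]
    exact ⟨m + (j - 1), hBsucc, sum_range_bounds_of_isLeast (fE_mono n) hj hlow hup⟩

lemma exists_Bemb_eq_add_bounds (n : ℕ) {t : ℕ → ℝ} (ht : Monotone t) (ht0 : t 0 = 0)
    (c : ℕ) : ∃ m : ℕ, Bemb n t c = m + c ∧ (m : ℝ) * (m - 1) / (2 * n) ≤ t c ∧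
      (m < n → t c ≤ ((m : ℝ) + c) ^ 2 / (2 * (n - m))) := by
  obtain ⟨m, hB, hlow, hup⟩ := exists_Bemb_eq_add_sum_bounds n ht ht0 c
  have htc : 0 ≤ t c := ht0 ▸ ht (Nat.zero_le c)
  refine ⟨m, hB, (ENNReal.ofReal_le_ofReal_iff htc).1 ((ofReal_le_sum_range_fE n m).trans hlow),
    fun hmn => ?_⟩
  have hnm : (0 : ℝ) < n - m := sub_pos.2 (by exact_mod_cast hmn)
  have hfirst : (0 : ℝ) ≤ m * (m - 1) / (2 * (n - m)) := by
    rcases Nat.eq_zero_or_pos m with h | h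
    · simp [h]
    · have : (1 : ℝ) ≤ m := by exact_mod_cast h
      have : 0 ≤ (m : ℝ) * (m - 1) := by nlinarith
      positivity
  have hsum : ENNReal.ofReal (t c) ≤
      ENNReal.ofReal ((m : ℝ) * (m - 1) / (2 * (n - m)) + c * ((m : ℝ) / (n - m))) := by
    rw [ENNReal.ofReal_add hfirst (by positivity), ENNReal.ofReal_mul (Nat.cast_nonneg c),
      ENNReal.ofReal_natCast]
    exact hup.trans (add_le_add (sum_range_fE_le_ofReal hmn) (by gcongr; exact fE_le_ofReal hmn))
  have e : ((m : ℝ) + c) ^ 2 / (2 * (n - m)) =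
      m * (m - 1) / (2 * (n - m)) + c * (m / (n - m)) + (m + c ^ 2) / (2 * (n - m)) := by
    field_simp; ring
  have : (0 : ℝ) ≤ (m + c ^ 2) / (2 * (n - m)) := by positivity
  linarith [(ENNReal.ofReal_le_ofReal_iff (by positivity)).1 hsum]

lemma abs_sq_div_sub_le {n m c t : ℝ} (hn : 0 < n) (hm : 0 ≤ m) (hc : 1 ≤ c) (hmn : 2 * m ≤ n)
    (hlow : m * (m - 1) / (2 * n) ≤ t) (hup : t ≤ (m + c) ^ 2 / (2 * (n - m))) :
    |(m + c) ^ 2 / (2 * n) - t| ≤ 2 * (m + c) * c / n + (m + c) ^ 3 / n ^ 2 := by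
  have hnm : 0 < n - m := by linarith
  have h₁ : (m + c) ^ 2 / (2 * n) - m * (m - 1) / (2 * n) ≤ 2 * (m + c) * c / n := by
    rw [div_sub_div_same, div_le_div_iff₀ (by positivity) hn]
    have : 0 ≤ (2 * m * c + 3 * c ^ 2 - m) * n := mul_nonneg (by nlinarith) hn.le
    nlinarith
  have h₂ : (m + c) ^ 2 / (2 * (n - m)) - (m + c) ^ 2 / (2 * n) ≤ (m + c) ^ 3 / n ^ 2 := by
    rw [div_sub_div _ _ (by positivity) (by positivity), div_le_div_iff₀ (by positivity)
      (by positivity)]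
    have : 0 ≤ (m + c) ^ 2 * n * (m * (n - 2 * m) + 2 * c * (n - m)) := by
      have := mul_nonneg hm (sub_nonneg.2 hmn)
      positivity
    nlinarith
  have h₃ : 0 ≤ 2 * (m + c) * c / n := by positivity
  have h₄ : 0 ≤ (m + c) ^ 3 / n ^ 2 := by positivity
  rw [abs_sub_le_iff]
  constructor <;> linarith

lemma le_one_add_of_mul_sub_one_le_sq {x D : ℝ} (hD : 0 ≤ D) (h : x * (x - 1) ≤ D ^ 2) :
    x ≤ 1 + D := by
  nlinarith

lemma add_le_mul_rpow {N x c D C α : ℝ} (hN : 1 ≤ N) (hα : α ∈ Set.Icc (-1) 1) (hD : 0 ≤ D)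
    (hC : 0 ≤ C) (hx : x * (x - 1) ≤ D * N ^ (1 + α)) (hc : c ≤ C * N ^ α) :
    x + c ≤ (1 + √D + C) * N ^ ((1 + α) / 2) := by
  have hN0 : 0 < N := by linarith
  have hsq : (√D * N ^ ((1 + α) / 2)) ^ 2 = D * N ^ (1 + α) := by
    rw [mul_pow, Real.sq_sqrt hD, ← Real.rpow_natCast, ← Real.rpow_mul hN0.le]
    norm_num
  have hx' := le_one_add_of_mul_sub_one_le_sq (by positivity) (hx.trans_eq hsq.symm)
  have h1 : 1 ≤ N ^ ((1 + α) / 2) := Real.one_le_rpow hN (by linarith [hα.1])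
  have h2 : N ^ α ≤ N ^ ((1 + α) / 2) := Real.rpow_le_rpow_of_exponent_le hN (by linarith [hα.2])
  nlinarith

lemma add_div_le_mul_rpow {N B c b C α : ℝ} (hN : 0 < N) (hB0 : 0 ≤ B) (hc0 : 0 ≤ c)
    (hB : B ≤ b * N ^ ((1 + α) / 2)) (hc : c ≤ C * N ^ α) :
    2 * B * c / N + B ^ 3 / N ^ 2 ≤ (2 * b * C + b ^ 3) * N ^ ((3 * α - 1) / 2) := by
  have e₁ : N ^ ((1 + α) / 2) * N ^ α = N ^ ((3 * α - 1) / 2) * N := by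
    rw [← Real.rpow_add hN, ← Real.rpow_add_one hN.ne']
    ring_nf
  have e₂ : (N ^ ((1 + α) / 2)) ^ 3 = N ^ ((3 * α - 1) / 2) * N ^ 2 := by
    rw [← Real.rpow_natCast, ← Real.rpow_mul hN.le, ← Real.rpow_add_natCast hN.ne']
    ring_nf
  have h₁ : B * c ≤ b * C * (N ^ ((3 * α - 1) / 2) * N) := by
    rw [← e₁]
    calc B * c ≤ (b * N ^ ((1 + α) / 2)) * (C * N ^ α) :=
          mul_le_mul hB hc hc0 (hB0.trans hB)
      _ = _ := by ring
  have h₂ : B ^ 3 ≤ b ^ 3 * (N ^ ((3 * α - 1) / 2) * N ^ 2) := by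
    rw [← e₂, ← mul_pow]
    exact pow_le_pow_left₀ hB0 hB 3
  rw [div_add_div _ _ hN.ne' (by positivity), div_le_iff₀ (by positivity)]
  nlinarith

lemma abs_Bemb_sq_div_sub_le {n c : ℕ} {t : ℕ → ℝ} (ht : Monotone t) (ht0 : t 0 = 0)
    {U C α : ℝ} (hα : α ∈ Set.Icc (-1) 1) (hU : 0 ≤ U) (hC : 0 ≤ C) (hn : 1 ≤ n) (hc : 1 ≤ c)
    (htc : t c ≤ U * c) (hcC : (c : ℝ) ≤ C * n ^ α)
    (hnb : 2 * (1 + √(2 * U * C) + C) ≤ (n : ℝ) ^ (1 - (1 + α) / 2)) :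
    |(Bemb n t c : ℝ) ^ 2 / (2 * n) - t c| ≤
      (2 * (1 + √(2 * U * C) + C) * C + (1 + √(2 * U * C) + C) ^ 3) *
        (n : ℝ) ^ ((3 * α - 1) / 2) := by
  have hN : (1 : ℝ) ≤ n := by exact_mod_cast hn
  have hc1 : (1 : ℝ) ≤ c := by exact_mod_cast hc
  obtain ⟨m, hB, hlow, hup⟩ := exists_Bemb_eq_add_bounds n ht ht0 c
  have hm : (m : ℝ) * (m - 1) ≤ 2 * U * C * n ^ (1 + α) := by
    rw [Real.rpow_add (by linarith), Real.rpow_one]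
    have htn : t c ≤ U * (C * n ^ α) := htc.trans (by gcongr)
    have := (div_le_iff₀ (by linarith)).1 (hlow.trans htn)
    linarith
  have hBb := add_le_mul_rpow hN hα (by positivity) hC hm hcC
  have hmn : 2 * (m : ℝ) ≤ n := by
    have := mul_le_mul_of_nonneg_right hnb (by positivity : (0 : ℝ) ≤ (n : ℝ) ^ ((1 + α) / 2))
    rw [← Real.rpow_add (by linarith), sub_add_cancel, Real.rpow_one] at this
    linarith
  rw [hB, Nat.cast_add]
  exact (abs_sq_div_sub_le (by linarith) m.cast_nonneg hc1 hmn hlow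
    (hup (by exact_mod_cast (by linarith : (m : ℝ) < n)))).trans
    (add_div_le_mul_rpow (by linarith) (by positivity) (by linarith) hBb hcC)

theorem stmt_6_general (t : ℕ → ℝ) (ht : StrictMono t) (ht0 : t 0 = 0)
    (hU : ∃ U : ℝ, ∀ c : ℕ, 1 ≤ c → t c / c ≤ U)
    (C : ℝ) (α : ℝ) (hα : α ∈ Set.Ioo (0 : ℝ) (1 / 3)) :
    ∃ K : ℝ, ∃ n₀ : ℕ, ∀ n : ℕ, n₀ ≤ n → ∀ c : ℕ, 1 ≤ c → (c : ℝ) ≤ C * (n : ℝ) ^ α →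
      |(Bemb n t c : ℝ) ^ 2 / (2 * n) - t c| ≤ K * (n : ℝ) ^ ((3 * α - 1) / 2) := by
  obtain ⟨U, hU⟩ := hU
  obtain ⟨hα0, hα1⟩ := hα
  set b := 1 + √(2 * max U 1 * max C 1) + max C 1
  obtain ⟨n₀, hn₀⟩ := eventually_atTop.1
    ((((tendsto_rpow_atTop (by linarith : 0 < 1 - (1 + α) / 2)).comp
      tendsto_natCast_atTop_atTop).eventually_ge_atTop (2 * b)).and (eventually_ge_atTop 1))
  refine ⟨2 * b * max C 1 + b ^ 3, n₀, fun n hn c hc hcn => ?_⟩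
  have htc : t c ≤ max U 1 * c :=
    ((div_le_iff₀ (by exact_mod_cast hc)).1 (hU c hc)).trans (by gcongr; exact le_max_left U 1)
  have hcC : (c : ℝ) ≤ max C 1 * n ^ α := hcn.trans (by gcongr; exact le_max_left C 1)
  exact abs_Bemb_sq_div_sub_le ht.monotone ht0 ⟨by linarith, by linarith⟩ (by positivity)
    (by positivity) (hn₀ n hn).2 hc htc hcC (hn₀ n hn).1

theorem stmt_6 (t : ℕ → ℝ) (ht : StrictMono t) (ht0 : t 0 = 0)
    (hL : ∃ L : ℝ, 0 < L ∧ ∀ c : ℕ, 1 ≤ c → L ≤ t c / c)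
    (hU : ∃ U : ℝ, ∀ c : ℕ, 1 ≤ c → t c / c ≤ U)
    (C : ℝ) (α : ℝ) (hα : α ∈ Set.Ioo (0 : ℝ) (1 / 3)) :
    ∃ K : ℝ, ∃ n₀ : ℕ, ∀ n : ℕ, n₀ ≤ n → ∀ c : ℕ, 1 ≤ c → (c : ℝ) ≤ C * (n : ℝ) ^ α →
      |(Bemb n t c : ℝ) ^ 2 / (2 * n) - t c| ≤ K * (n : ℝ) ^ ((3 * α - 1) / 2) :=
  stmt_6_general t ht ht0 hU C α hα
end

section
/- In the balls-in-bins model, for all integers b ≥ 1, n ≥ 1 and 0 ≤ y ≤ b−1, the probability that exactly y collisions occur after b throws satisfies P(C(b,n) = y) ≤ binom(b,y) · b^y · (n)_{b−y} / n^b, where (n)_m := n(n−1)⋯(n−m+1) denotes the falling factorial (equal to 0 when m > n). -/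
open MeasureTheory ProbabilityTheory Filter Topology
open scoped ENNReal NNReal

/-- Number of collisions after `b` throws, `C(b,n) = b - |{X_1,…,X_b}|`. -/
def collisions {Ω : Type*} (X : ℕ → Ω → ℕ) (b : ℕ) (ω : Ω) : ℕ :=
  b - ((Finset.range b).image fun i => X i ω).card

/-- `B(c,n) = inf { b : C(b,n) ≥ c }` in the balls-in-bins model. -/
noncomputable def ballsB {Ω : Type*} (X : ℕ → Ω → ℕ) (c : ℕ) (ω : Ω) : ℕ :=
  sInf {b : ℕ | c ≤ collisions X b ω}

/-- The uniform distribution on the bins `{1, …, n}`, as a measure on `ℕ`. -/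
noncomputable def unifBins (n : ℕ) : Measure ℕ :=
  ((n : ℝ≥0∞))⁻¹ • ∑ k ∈ Finset.Icc 1 n, Measure.dirac k

/-!
Write the first `b` throws as a tuple `v : Fin b → ℕ` and call `i` a collision index when some
earlier `j < i` has `v j = v i`; the number of collisions is the number of collision indices,
since `v` is injective on the remaining indices and still hits every occupied bin. A tuple with
collision set `S` is determined by its restriction to `Sᶜ`, an injection into the `n` bins, and
by the choice, for each `i ∈ S`, of an earlier index with the same value. Hence there are at most
`(n)_{b-|S|} * b^|S|` such tuples, and summing over the `binom(b, y)` sets `S` of size `y` bounds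
the number of tuples with `y` collisions, each of which has probability `n^{-b}`.
-/

open Finset

section Collisions

variable {α : Type*} [DecidableEq α] {b : ℕ}

def collisionIndices (v : Fin b → α) : Finset (Fin b) := {i | ∃ j < i, v j = v i}

lemma mem_collisionIndices {v : Fin b → α} {i : Fin b} :
    i ∈ collisionIndices v ↔ ∃ j < i, v j = v i := by
  simp [collisionIndices]

lemma injOn_compl_collisionIndices (v : Fin b → α) : Set.InjOn v ↑(collisionIndices v)ᶜ := by
  intro i hi j hj hij
  simp only [coe_compl, Set.mem_compl_iff, mem_coe, mem_collisionIndices, not_exists,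
    not_and] at hi hj
  rcases lt_trichotomy i j with h | h | h
  · exact absurd hij (hj i h)
  · exact h
  · exact absurd hij.symm (hi j h)

lemma image_compl_collisionIndices (v : Fin b → α) :
    (collisionIndices v)ᶜ.image v = univ.image v := by
  refine (image_subset_image (subset_univ _)).antisymm fun x hx => ?_
  obtain ⟨i, -, rfl⟩ := mem_image.1 hx
  clear hx
  induction i using WellFoundedLT.induction with
  | _ i ih =>
    by_cases hi : i ∈ collisionIndices v
    · obtain ⟨j, hji, hj⟩ := mem_collisionIndices.1 hi
      exact hj ▸ ih j hji
    · exact mem_image_of_mem v (mem_compl.2 hi)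

lemma card_image_add_card_collisionIndices (v : Fin b → α) :
    #(univ.image v) + #(collisionIndices v) = b := by
  rw [← image_compl_collisionIndices, card_image_of_injOn (injOn_compl_collisionIndices v),
    card_compl_add_card, Fintype.card_fin]

noncomputable def collisionPartner (v : Fin b → α) (i : Fin b) : Fin b :=
  if h : i ∈ collisionIndices v then (mem_collisionIndices.1 h).choose else i

lemma collisionPartner_lt {v : Fin b → α} {i : Fin b} (h : i ∈ collisionIndices v) :
    collisionPartner v i < i := by
  rw [collisionPartner, dif_pos h]
  exact (mem_collisionIndices.1 h).choose_spec.1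

lemma apply_collisionPartner (v : Fin b → α) (i : Fin b) : v (collisionPartner v i) = v i := by
  unfold collisionPartner
  split_ifs with h
  · exact (mem_collisionIndices.1 h).choose_spec.2
  · rfl

lemma eq_of_collisionPartner_eq {v w : Fin b → α}
    (hcompl : ∀ i ∉ collisionIndices v, v i = w i)
    (hpartner : ∀ i ∈ collisionIndices v, collisionPartner v i = collisionPartner w i) :
    v = w := by
  funext i
  induction i using WellFoundedLT.induction with
  | _ i ih =>
    by_cases hi : i ∈ collisionIndices v
    · rw [← apply_collisionPartner v i, ← apply_collisionPartner w i, ← hpartner i hi]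
      exact ih _ (collisionPartner_lt hi)
    · exact hcompl i hi

lemma card_filter_collisionIndices_eq_le (s : Finset α) (S : Finset (Fin b)) :
    #{v ∈ Fintype.piFinset fun _ : Fin b => s | collisionIndices v = S}
      ≤ (#s).descFactorial (b - #S) * b ^ #S := by
  set F := {v ∈ Fintype.piFinset fun _ : Fin b => s | collisionIndices v = S}
  have hF {v} (hv : v ∈ F) : (∀ i, v i ∈ s) ∧ collisionIndices v = S := by
    simpa [F] using hv
  let encode : F → ((Sᶜ : Finset (Fin b)) ↪ s) × (S → Fin b) := fun v =>
    (⟨fun i => ⟨v.1 i, (hF v.2).1 i⟩, fun i j hij => Subtype.ext <|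
        injOn_compl_collisionIndices v.1 (by simpa [(hF v.2).2] using mem_compl.1 i.2)
          (by simpa [(hF v.2).2] using mem_compl.1 j.2) (congrArg Subtype.val hij)⟩,
      fun i => collisionPartner v.1 i)
  have hencode : Function.Injective encode := by
    rintro ⟨v, hv⟩ ⟨w, hw⟩ h
    simp only [encode, Prod.mk.injEq] at h
    refine Subtype.ext (eq_of_collisionPartner_eq (fun i hi => ?_) (fun i hi => ?_))
    · rw [(hF hv).2] at hi
      exact congrArg Subtype.val (DFunLike.congr_fun h.1 ⟨i, mem_compl.2 hi⟩)
    · rw [(hF hv).2] at hi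
      exact congrFun h.2 ⟨i, hi⟩
  calc #F = Fintype.card F := (Fintype.card_coe F).symm
    _ ≤ _ := Fintype.card_le_of_injective encode hencode
    _ = (#s).descFactorial (b - #S) * b ^ #S := by
      simp [Fintype.card_embedding_eq]

lemma card_filter_card_collisionIndices_eq_le (s : Finset α) (y : ℕ) :
    #{v ∈ Fintype.piFinset fun _ : Fin b => s | #(collisionIndices v) = y}
      ≤ b.choose y * (#s).descFactorial (b - y) * b ^ y := by
  have hmaps : ∀ v ∈ {v ∈ Fintype.piFinset fun _ : Fin b => s | #(collisionIndices v) = y},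
      collisionIndices v ∈ powersetCard y (univ : Finset (Fin b)) := by
    intro v hv
    simpa using (mem_filter.1 hv).2
  rw [card_eq_sum_card_fiberwise hmaps]
  calc _ ≤ ∑ _S ∈ powersetCard y (univ : Finset (Fin b)),
        (#s).descFactorial (b - y) * b ^ y := by
        refine sum_le_sum fun S hS => ?_
        rw [← (mem_powersetCard.1 hS).2, filter_filter]
        refine le_trans (card_le_card fun v hv => ?_) (card_filter_collisionIndices_eq_le s S)
        simp only [mem_filter] at hv ⊢
        exact ⟨hv.1, hv.2.2⟩
    _ = b.choose y * (#s).descFactorial (b - y) * b ^ y := by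
        rw [sum_const, card_powersetCard, card_univ, Fintype.card_fin, smul_eq_mul, mul_assoc]

end Collisions

lemma unifBins_apply (n : ℕ) (s : Set ℕ) [DecidablePred (· ∈ s)] :
    unifBins n s = (n : ℝ≥0∞)⁻¹ * #{k ∈ Icc 1 n | k ∈ s} := by
  simp [unifBins, Set.indicator_apply, sum_boole]

lemma unifBins_singleton {n k : ℕ} (hk : k ∈ Icc 1 n) : unifBins n {k} = (n : ℝ≥0∞)⁻¹ := by
  simp [unifBins_apply, filter_eq', hk]

lemma ae_unifBins_mem_Icc (n : ℕ) : ∀ᵐ k ∂unifBins n, k ∈ Icc 1 n := by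
  rw [ae_iff]
  simp [unifBins_apply]

section UniformBins

variable {Ω : Type*} [MeasurableSpace Ω] {μ : Measure Ω} {X : ℕ → Ω → ℕ} {n b : ℕ}

lemma ae_forall_mem_Icc_of_map_eq_unifBins (hmeas : ∀ i, Measurable (X i))
    (hunif : ∀ i, μ.map (X i) = unifBins n) :
    ∀ᵐ ω ∂μ, ∀ i, X i ω ∈ Icc 1 n := by
  refine ae_all_iff.2 fun i => ?_
  rw [← ae_map_iff (hmeas i).aemeasurable (by measurability), hunif i]
  exact ae_unifBins_mem_Icc n

lemma measure_tuple_eq_of_iIndepFun (hmeas : ∀ i, Measurable (X i)) (hindep : iIndepFun X μ)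
    (hunif : ∀ i, μ.map (X i) = unifBins n) {v : Fin b → ℕ} (hv : ∀ i, v i ∈ Icc 1 n) :
    μ {ω | ∀ i : Fin b, X i ω = v i} = (n : ℝ≥0∞)⁻¹ ^ b := by
  have hcyl : {ω | ∀ i : Fin b, X i ω = v i} = ⋂ i : Fin b, X i ⁻¹' {v i} := by
    ext; simp
  rw [hcyl, (hindep.precomp Fin.val_injective).meas_iInter
    fun i => ⟨{v i}, measurableSet_singleton _, rfl⟩]
  simp_rw [← Measure.map_apply (hmeas _) (measurableSet_singleton _), hunif,
    unifBins_singleton (hv _), prod_const, card_univ, Fintype.card_fin]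

lemma measure_tuple_le_of_iIndepFun (hmeas : ∀ i, Measurable (X i)) (hindep : iIndepFun X μ)
    (hunif : ∀ i, μ.map (X i) = unifBins n) (p : (Fin b → ℕ) → Prop) [DecidablePred p] :
    μ {ω | p fun i => X i ω}
      ≤ #{v ∈ Fintype.piFinset fun _ : Fin b => Icc 1 n | p v} * (n : ℝ≥0∞)⁻¹ ^ b := by
  set F := {v ∈ Fintype.piFinset fun _ : Fin b => Icc 1 n | p v}
  calc μ {ω | p fun i => X i ω} ≤ μ (⋃ v ∈ F, {ω | ∀ i : Fin b, X i ω = v i}) := by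
        refine measure_mono_ae ?_
        filter_upwards [ae_forall_mem_Icc_of_map_eq_unifBins hmeas hunif] with ω hω hp
        exact Set.mem_iUnion₂.2
          ⟨fun i => X i ω, mem_filter.2 ⟨Fintype.mem_piFinset.2 fun i => hω i, hp⟩, fun _ => rfl⟩
    _ ≤ ∑ v ∈ F, μ {ω | ∀ i : Fin b, X i ω = v i} := measure_biUnion_finset_le _ _
    _ = #F * (n : ℝ≥0∞)⁻¹ ^ b := by
        rw [sum_congr rfl fun v hv => measure_tuple_eq_of_iIndepFun hmeas hindep hunif
          (Fintype.mem_piFinset.1 (mem_filter.1 hv).1), sum_const, nsmul_eq_mul]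

end UniformBins

lemma collisions_eq_card_collisionIndices {Ω : Type*} (X : ℕ → Ω → ℕ) (b : ℕ) (ω : Ω) :
    collisions X b ω = #(collisionIndices fun i : Fin b => X i ω) := by
  have himage : univ.image (fun i : Fin b => X i ω) = (range b).image (X · ω) := by
    ext; simp [Fin.exists_iff]
  have := card_image_add_card_collisionIndices fun i : Fin b => X i ω
  rw [collisions, ← himage]
  omega

theorem stmt_7_general {Ω : Type*} [MeasurableSpace Ω] (μ : Measure Ω)
    (n b y : ℕ) (hn : 1 ≤ n)
    (X : ℕ → Ω → ℕ) (hmeas : ∀ i, Measurable (X i))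
    (hindep : iIndepFun X μ)
    (hunif : ∀ i, μ.map (X i) = unifBins n) :
    (μ {ω | collisions X b ω = y}).toReal ≤
      (b.choose y : ℝ) * (b : ℝ) ^ y * (n.descFactorial (b - y) : ℝ) / (n : ℝ) ^ b := by
  have hcount := card_filter_card_collisionIndices_eq_le (b := b) (Icc 1 n) y
  rw [Nat.card_Icc, add_tsub_cancel_right] at hcount
  have hμ : μ {ω | collisions X b ω = y}
      ≤ (b.choose y * n.descFactorial (b - y) * b ^ y : ℕ) * (n : ℝ≥0∞)⁻¹ ^ b := by
    simp_rw [collisions_eq_card_collisionIndices]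
    exact (measure_tuple_le_of_iIndepFun hmeas hindep hunif
      fun v => #(collisionIndices v) = y).trans (by gcongr)
  have hn0 : (n : ℝ≥0∞) ≠ 0 := by exact_mod_cast (by omega : n ≠ 0)
  calc (μ {ω | collisions X b ω = y}).toReal
      ≤ ((b.choose y * n.descFactorial (b - y) * b ^ y : ℕ) * (n : ℝ≥0∞)⁻¹ ^ b).toReal :=
        ENNReal.toReal_mono (by finiteness) hμ
    _ = _ := by
        simp only [ENNReal.toReal_mul, ENNReal.toReal_pow, ENNReal.toReal_inv,
          ENNReal.toReal_natCast]
        push_cast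
        ring

theorem stmt_7 {Ω : Type*} [MeasurableSpace Ω] (μ : Measure Ω) [IsProbabilityMeasure μ]
    (n b y : ℕ) (hn : 1 ≤ n) (hb : 1 ≤ b) (hy : y ≤ b - 1)
    (X : ℕ → Ω → ℕ) (hmeas : ∀ i, Measurable (X i))
    (hindep : iIndepFun X μ)
    (hunif : ∀ i, μ.map (X i) = unifBins n) :
    (μ {ω | collisions X b ω = y}).toReal ≤
      (b.choose y : ℝ) * (b : ℝ) ^ y * (n.descFactorial (b - y) : ℝ) / (n : ℝ) ^ b :=
  stmt_7_general μ n b y hn X hmeas hindep hunif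
end

section
/- In the balls-in-bins model (each X_i uniformly distributed on {1,…,n}), let b ≥ 2, n ≥ 1 be integers, let C := C(b,n) be the number of collisions after b throws, and suppose E[C] > 0. Then there exists a probability measure ν on ℤ_{≥0} × ℤ_{≥0} whose first marginal is the law of C, whose second marginal is the size-biased law of C (the law assigning probability k·P(C = k)/E[C] to each k), and which is supported on the set {(x, y) : y − x ∈ {0, 1}}. -/
open MeasureTheory ProbabilityTheory Filter Topology
open scoped ENNReal NNReal

/-- The size-biased law of a distribution `L` on `ℕ`, with mean `m`: it assigns
mass `k·L{k}/m` to each `k ≥ 0`. -/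
noncomputable def sizeBiased (L : Measure ℕ) (m : ℝ) : Measure ℕ :=
  Measure.sum fun k : ℕ => (((k : ℝ≥0∞) * L ({k} : Set ℕ)) / ENNReal.ofReal m) • Measure.dirac k

/-!
If `p` and `q` are laws on `ℕ` with `p(< k) ≤ q(≤ k) ≤ p(≤ k)` for every `k`, they are coupled
on `{y - x ∈ {0, 1}}` by putting mass `q(≤ k) - p(< k)` at `(k, k)` and `p(≤ k) - q(≤ k)` at
`(k, k + 1)`. For `q` the size-biased law of `C`, the upper bound says
`E[C; C ≤ k] ≤ E[C] P(C ≤ k)`, true for any random variable. The lower bound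
`E[C] P(C < k) ≤ E[C; C ≤ k]` is the real content. Write `C = ∑ᵢ Rᵢ`, where `Rᵢ` says that
ball `i` lands in a bin already occupied by an earlier ball. On `{Rᵢ = 1}` the event `{C ≤ k}`
is the event `Gᵢ` that the balls other than `i` occupy at least `b - k` bins, and `{C < k} ⊆ Gᵢ`.
Averaging over the bin of ball `i` replaces `Rᵢ` by `Sᵢ / n`, with `Sᵢ` the number of bins
occupied before ball `i`. Finally, `Sᵢ` and `Gᵢ` are positively correlated: given the balls
before `i`, the conditional probability of `Gᵢ` is a nondecreasing function of `Sᵢ` (relabel the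
bins), so Chebyshev's sum inequality applies.
-/

open Finset

namespace BallsInBins

section
variable {α : Type*} [DecidableEq α]

theorem exists_perm_image_subset {A B : Finset α} (h : #A ≤ #B) :
    ∃ σ : Equiv.Perm α, A.image σ ⊆ B := by
  obtain ⟨B', hB', hcard⟩ := exists_subset_card_eq h
  let e : {a // a ∈ A} ≃ {a // a ∈ B'} := Fintype.equivOfCardEq (by simp [hcard])
  refine ⟨e.extendSubtype, fun a ha => ?_⟩
  obtain ⟨a, haA, rfl⟩ := mem_image.mp ha
  exact hB' (e.extendSubtype_mem a haA)

end

section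
variable {ι α : Type*} [Fintype ι] [DecidableEq ι] [Fintype α]

theorem sum_sum_update_eq_card_smul {M : Type*} [AddCommMonoid M] (i : ι)
    (G : (ι → α) → M) :
    ∑ x, ∑ c, G (Function.update x i c) = Fintype.card α • ∑ x, G x := by
  let e : Equiv.Perm ((ι → α) × α) := Function.Involutive.toPerm
    (fun p => (Function.update p.1 i p.2, p.1 i)) (fun p => by simp)
  calc ∑ x, ∑ c, G (Function.update x i c)
      = ∑ p : (ι → α) × α, G (Function.update p.1 i p.2) := (Fintype.sum_prod_type' _).symm
    _ = ∑ p : (ι → α) × α, G p.1 := Fintype.sum_equiv e _ _ fun _ => rfl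
    _ = Fintype.card α • ∑ x, G x := by simp [Fintype.sum_prod_type, smul_sum]

theorem sum_sum_piecewise_eq_card_smul {M : Type*} [AddCommMonoid M] (t : Finset ι)
    (G : (ι → α) → M) :
    ∑ x, ∑ z, G (t.piecewise x z) = Fintype.card (ι → α) • ∑ x, G x := by
  let e : Equiv.Perm ((ι → α) × (ι → α)) := Function.Involutive.toPerm
    (fun p => (t.piecewise p.1 p.2, t.piecewise p.2 p.1))
    (fun p => by ext i <;> by_cases hi : i ∈ t <;> simp [hi])
  calc ∑ x, ∑ z, G (t.piecewise x z)
      = ∑ p : (ι → α) × (ι → α), G (t.piecewise p.1 p.2) := (Fintype.sum_prod_type' _).symm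
    _ = ∑ p : (ι → α) × (ι → α), G p.1 := Fintype.sum_equiv e _ _ fun _ => rfl
    _ = Fintype.card (ι → α) • ∑ x, G x := by simp [Fintype.sum_prod_type, smul_sum]

variable [DecidableEq α]

theorem card_filter_le_card_union_image_mono {U : Finset ι} {r : ℕ} {A B : Finset α}
    (h : #A ≤ #B) :
    #{z : ι → α | r ≤ #(A ∪ U.image z)} ≤ #{z : ι → α | r ≤ #(B ∪ U.image z)} := by
  obtain ⟨σ, hσ⟩ := exists_perm_image_subset h
  refine card_le_card_of_injOn (fun z => σ ∘ z) (fun z hz => ?_) σ.injective.comp_left.injOn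
  simp only [coe_filter, mem_univ, true_and, Set.mem_ofPred_eq] at hz ⊢
  calc r ≤ #(A ∪ U.image z) := hz
    _ = #(A.image σ ∪ U.image (σ ∘ z)) := by
      rw [← image_image, ← image_union, card_image_of_injective _ σ.injective]
    _ ≤ #(B ∪ U.image (σ ∘ z)) := card_le_card (union_subset_union_left hσ)

end

section
variable {ι α : Type*} [Fintype ι] [DecidableEq α]

def numCollisions (x : ι → α) : ℕ := Fintype.card ι - #(univ.image x)

theorem numCollisions_comp_of_injective {β : Type*} [DecidableEq β] {f : α → β}
    (hf : Function.Injective f) (x : ι → α) : numCollisions (f ∘ x) = numCollisions x := by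
  rw [numCollisions, numCollisions, ← image_image, card_image_of_injective _ hf]

variable [LinearOrder ι]

def occupiedBefore (x : ι → α) (i : ι) : Finset α := ({j | j < i} : Finset ι).image x

def occupiedExcept (x : ι → α) (i : ι) : Finset α := (univ.erase i).image x

theorem card_image_eq_card_filter_notMem_occupiedBefore (x : ι → α) :
    #(univ.image x) = #{i | x i ∉ occupiedBefore x i} := by
  symm
  refine card_nbij x (fun i _ => mem_image_of_mem x (mem_univ i)) ?_ ?_
  · intro i hi j hj hij
    simp only [occupiedBefore, coe_filter, mem_univ, true_and, Set.mem_ofPred_eq, mem_image,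
      mem_filter, not_exists, not_and] at hi hj
    rcases lt_trichotomy i j with h | h | h
    · exact absurd hij (hj i h)
    · exact h
    · exact absurd hij.symm (hi j h)
  · intro a ha
    obtain ⟨j, -, rfl⟩ := mem_image.mp (mem_coe.mp ha)
    have hne : ({i | x i = x j} : Finset ι).Nonempty := ⟨j, by simp⟩
    have hmin := mem_filter.mp (min'_mem _ hne)
    refine ⟨_, ?_, hmin.2⟩
    simp only [occupiedBefore, coe_filter, mem_univ, true_and, Set.mem_ofPred_eq, mem_image,
      mem_filter, not_exists, not_and]
    intro i hi hxi
    exact (min'_le _ i (by simp [hxi, hmin.2])).not_gt hi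

theorem numCollisions_eq_card_filter_mem_occupiedBefore (x : ι → α) :
    numCollisions x = #{i | x i ∈ occupiedBefore x i} := by
  have := card_filter_add_card_filter_not (s := univ) (fun i => x i ∈ occupiedBefore x i)
  rw [card_univ] at this
  rw [numCollisions, card_image_eq_card_filter_notMem_occupiedBefore]
  omega

theorem sum_numCollisions_eq_sum_card_filter (s : Finset (ι → α)) :
    ∑ x ∈ s, numCollisions x = ∑ i, #{x ∈ s | x i ∈ occupiedBefore x i} := by
  simp only [numCollisions_eq_card_filter_mem_occupiedBefore, card_filter]
  exact sum_comm

theorem image_eq_insert_occupiedExcept (x : ι → α) (i : ι) :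
    univ.image x = insert (x i) (occupiedExcept x i) := by
  rw [occupiedExcept, ← image_insert, insert_erase (mem_univ i)]

theorem occupiedBefore_subset_occupiedExcept (x : ι → α) (i : ι) :
    occupiedBefore x i ⊆ occupiedExcept x i :=
  image_subset_image fun j hj => mem_erase.mpr ⟨(mem_filter.mp hj).2.ne, mem_univ j⟩

theorem occupiedBefore_update_self (x : ι → α) (i : ι) (c : α) :
    occupiedBefore (Function.update x i c) i = occupiedBefore x i :=
  image_congr fun _ hj => Function.update_of_ne (mem_filter.mp hj).2.ne _ _

theorem occupiedExcept_update_self (x : ι → α) (i : ι) (c : α) :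
    occupiedExcept (Function.update x i c) i = occupiedExcept x i :=
  image_congr fun _ hj => Function.update_of_ne (ne_of_mem_erase hj) _ _

theorem occupiedBefore_piecewise (x z : ι → α) (i : ι) :
    occupiedBefore (({j | j < i} : Finset ι).piecewise x z) i = occupiedBefore x i :=
  image_congr fun _ hj => piecewise_eq_of_mem _ _ _ hj

theorem occupiedExcept_piecewise (x z : ι → α) (i : ι) :
    occupiedExcept (({j | j < i} : Finset ι).piecewise x z) i
      = occupiedBefore x i ∪ ({j | i < j} : Finset ι).image z := by
  have hsplit : univ.erase i = ({j | j < i} : Finset ι) ∪ ({j | i < j} : Finset ι) := by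
    ext j
    simp
  rw [occupiedExcept, hsplit, image_union, occupiedBefore]
  congr 1
  · exact image_congr fun j hj => piecewise_eq_of_mem _ _ _ hj
  · exact image_congr fun j hj =>
      piecewise_eq_of_notMem _ _ _ fun hj' => (mem_filter.mp hj').2.asymm (mem_filter.mp hj).2

end

section
variable {ι α : Type*} [Fintype ι] [LinearOrder ι] [Fintype α] [DecidableEq α]

theorem card_mul_card_filter_mem_occupiedBefore (i : ι) (Q : (ι → α) → Prop) [DecidablePred Q]
    (hQ : ∀ x c, Q (Function.update x i c) ↔ Q x) :
    Fintype.card α * #{x | x i ∈ occupiedBefore x i ∧ Q x}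
      = ∑ x with Q x, #(occupiedBefore x i) := by
  rw [card_filter, ← smul_eq_mul, ← sum_sum_update_eq_card_smul i, sum_filter]
  refine sum_congr rfl fun x _ => ?_
  simp only [Function.update_self, occupiedBefore_update_self, hQ]
  by_cases hx : Q x <;> simp [hx]

theorem sum_card_occupiedBefore_mul_card_filter_le [Nonempty α] (i : ι) (r : ℕ) :
    (∑ x : ι → α, #(occupiedBefore x i)) * #{x : ι → α | r ≤ #(occupiedExcept x i)}
      ≤ Fintype.card (ι → α)
          * ∑ x : ι → α with r ≤ #(occupiedExcept x i), #(occupiedBefore x i) := by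
  set N := Fintype.card (ι → α)
  set t : Finset ι := {j | j < i}
  let ind : (ι → α) → ℕ := fun y => if r ≤ #(occupiedExcept y i) then 1 else 0
  let cnt : Finset α → ℕ := fun A => #{z : ι → α | r ≤ #(A ∪ ({j | i < j} : Finset ι).image z)}
  have hcnt : ∀ x : ι → α, ∑ z, ind (t.piecewise x z) = cnt (occupiedBefore x i) := fun x => by
    simp only [ind, cnt, t, occupiedExcept_piecewise, card_filter]
  have hsum_cnt : ∑ x : ι → α, cnt (occupiedBefore x i)
      = N * #{x : ι → α | r ≤ #(occupiedExcept x i)} := by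
    simp_rw [← hcnt]
    rw [sum_sum_piecewise_eq_card_smul, card_filter, smul_eq_mul]
  have hsum_mul_cnt : ∑ x : ι → α, #(occupiedBefore x i) * cnt (occupiedBefore x i)
      = N * ∑ x : ι → α with r ≤ #(occupiedExcept x i), #(occupiedBefore x i) := by
    calc ∑ x, #(occupiedBefore x i) * cnt (occupiedBefore x i)
        = ∑ x, ∑ z, #(occupiedBefore (t.piecewise x z) i) * ind (t.piecewise x z) := by
          have hocc : ∀ x z : ι → α, occupiedBefore (t.piecewise x z) i = occupiedBefore x i :=
            fun x z => occupiedBefore_piecewise x z i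
          simp_rw [hocc, ← mul_sum, hcnt]
      _ = N * ∑ x, #(occupiedBefore x i) * ind x :=
          sum_sum_piecewise_eq_card_smul t fun y => #(occupiedBefore y i) * ind y
      _ = N * ∑ x with r ≤ #(occupiedExcept x i), #(occupiedBefore x i) := by
          simp [ind, sum_filter]
  have hmono : Monovary (fun x : ι → α => #(occupiedBefore x i)) (cnt <| occupiedBefore · i) :=
    fun x y h => by
      by_contra! h'
      exact (card_filter_le_card_union_image_mono h'.le).not_gt h
  have key := hmono.sum_mul_sum_le_card_mul_sum
  rw [hsum_cnt, hsum_mul_cnt] at key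
  refine Nat.le_of_mul_le_mul_left ?_ (Fintype.card_pos : 0 < N)
  calc N * ((∑ x : ι → α, #(occupiedBefore x i)) * #{x : ι → α | r ≤ #(occupiedExcept x i)})
      = (∑ x : ι → α, #(occupiedBefore x i))
          * (N * #{x : ι → α | r ≤ #(occupiedExcept x i)}) := by ring
    _ ≤ _ := key

theorem sum_numCollisions_mul_card_lt_le [Nonempty α] (k : ℕ) :
    (∑ x : ι → α, numCollisions x) * #{x : ι → α | numCollisions x < k}
      ≤ Fintype.card (ι → α) * ∑ x : ι → α with numCollisions x ≤ k, numCollisions x := by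
  let P : ι → (ι → α) → Prop := fun i x => Fintype.card ι - k ≤ #(occupiedExcept x i)
  have hlt : ∀ i (x : ι → α), numCollisions x < k → P i x := fun i x hx => by
    have := card_insert_le (x i) (occupiedExcept x i)
    rw [← image_eq_insert_occupiedExcept] at this
    simp only [P, numCollisions] at hx ⊢
    omega
  have hrep : ∀ i (x : ι → α), x i ∈ occupiedBefore x i → (numCollisions x ≤ k ↔ P i x) :=
    fun i x hx => by
      rw [numCollisions, image_eq_insert_occupiedExcept x i,
        insert_eq_of_mem (occupiedBefore_subset_occupiedExcept x i hx)]
      simp only [P]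
      omega
  have hall : Fintype.card α * ∑ x : ι → α, numCollisions x
      = ∑ i, ∑ x : ι → α, #(occupiedBefore x i) := by
    rw [sum_numCollisions_eq_sum_card_filter, mul_sum]
    refine sum_congr rfl fun i _ => ?_
    simpa using card_mul_card_filter_mem_occupiedBefore (α := α) i (fun _ => True) (by simp)
  have hle : Fintype.card α * ∑ x : ι → α with numCollisions x ≤ k, numCollisions x
      = ∑ i, ∑ x : ι → α with P i x, #(occupiedBefore x i) := by
    rw [sum_numCollisions_eq_sum_card_filter, mul_sum]
    refine sum_congr rfl fun i _ => ?_
    rw [← card_mul_card_filter_mem_occupiedBefore i (P i)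
      (fun x c => by simp only [P, occupiedExcept_update_self]), filter_filter]
    congr 2
    ext x
    simp only [mem_filter, mem_univ, true_and]
    exact ⟨fun h => ⟨h.2, (hrep i x h.2).mp h.1⟩, fun h => ⟨(hrep i x h.1).mpr h.2, h.1⟩⟩
  refine Nat.le_of_mul_le_mul_left ?_ (Fintype.card_pos : 0 < Fintype.card α)
  calc Fintype.card α * ((∑ x : ι → α, numCollisions x) * #{x : ι → α | numCollisions x < k})
      = ∑ i, (∑ x : ι → α, #(occupiedBefore x i)) * #{x : ι → α | numCollisions x < k} := by
        rw [← mul_assoc, hall, sum_mul]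
    _ ≤ ∑ i, (∑ x : ι → α, #(occupiedBefore x i)) * #{x : ι → α | P i x} :=
        sum_le_sum fun i _ => Nat.mul_le_mul_left _
          (card_le_card (monotone_filter_right _ fun x _ => hlt i x))
    _ ≤ ∑ i, Fintype.card (ι → α) * ∑ x : ι → α with P i x, #(occupiedBefore x i) :=
        sum_le_sum fun i _ => sum_card_occupiedBefore_mul_card_filter_le i _
    _ = Fintype.card α
          * (Fintype.card (ι → α) * ∑ x : ι → α with numCollisions x ≤ k, numCollisions x) := by
        rw [← mul_sum, ← hle]
        ring

end

section
variable (ι α : Type*) [Fintype ι] [DecidableEq ι] [Fintype α] [DecidableEq α]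

noncomputable def collisionLaw : Measure ℕ :=
  (Fintype.card (ι → α) : ℝ≥0∞)⁻¹ • ∑ y : ι → α, Measure.dirac (numCollisions y)

variable {ι α}

theorem setLIntegral_collisionLaw (g : ℕ → ℝ≥0∞) (s : Set ℕ) [DecidablePred (· ∈ s)] :
    ∫⁻ j in s, g j ∂collisionLaw ι α
      = (Fintype.card (ι → α) : ℝ≥0∞)⁻¹
          * ∑ y : ι → α with numCollisions y ∈ s, g (numCollisions y) := by
  rw [← lintegral_indicator (DiscreteMeasurableSpace.forall_measurableSet s), collisionLaw,
    lintegral_smul_measure, lintegral_finsetSum_measure, sum_filter]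
  simp [Set.indicator_apply]

end

theorem lintegral_mul_collisionLaw_Iio_le {ι α : Type*} [Fintype ι] [LinearOrder ι] [Fintype α]
    [DecidableEq α] [Nonempty α] (k : ℕ) :
    (∫⁻ j, (j : ℝ≥0∞) ∂collisionLaw ι α) * collisionLaw ι α (Set.Iio k)
      ≤ ∫⁻ j in Set.Iic k, (j : ℝ≥0∞) ∂collisionLaw ι α := by
  set N : ℝ≥0∞ := (Fintype.card (ι → α) : ℝ≥0∞) with hN
  have hN0 : N ≠ 0 := by simp [N]
  rw [← setLIntegral_univ, ← setLIntegral_one, setLIntegral_collisionLaw,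
    setLIntegral_collisionLaw, setLIntegral_collisionLaw]
  simp only [Set.mem_univ, filter_true, Set.mem_Iio, Set.mem_Iic, sum_const, nsmul_eq_mul, mul_one,
    ← Nat.cast_sum]
  calc N⁻¹ * (∑ y : ι → α, numCollisions y : ℕ) * (N⁻¹ * #{y : ι → α | numCollisions y < k})
      = N⁻¹ * (N⁻¹ * ((∑ y : ι → α, numCollisions y : ℕ)
          * #{y : ι → α | numCollisions y < k})) := by ring
    _ ≤ N⁻¹ * (N⁻¹ * (N * (∑ y : ι → α with numCollisions y ≤ k, numCollisions y : ℕ))) := by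
        gcongr N⁻¹ * (N⁻¹ * ?_)
        rw [hN]
        exact_mod_cast sum_numCollisions_mul_card_lt_le k
    _ = N⁻¹ * (∑ y : ι → α with numCollisions y ≤ k, numCollisions y : ℕ) := by
        rw [ENNReal.inv_mul_cancel_left hN0 (ENNReal.natCast_ne_top _)]

theorem collisions_eq_comp {Ω : Type*} (X : ℕ → Ω → ℕ) (b : ℕ) :
    collisions X b = numCollisions ∘ fun ω (i : Fin b) => X i ω := by
  funext ω
  rw [Function.comp_apply, collisions, numCollisions, Fintype.card_fin]
  congr 2
  ext a
  simp [Fin.exists_iff]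

section
variable {Ω : Type*} [MeasurableSpace Ω] {μ : Measure Ω} {n b : ℕ} {X : ℕ → Ω → ℕ}

theorem measurable_collisions (hmeas : ∀ i, Measurable (X i)) (b : ℕ) :
    Measurable (collisions X b) := by
  rw [collisions_eq_comp]
  exact (measurable_of_countable _).comp (measurable_pi_lambda _ fun i => hmeas i)

theorem ofReal_integral_collisions [IsFiniteMeasure μ] (hmeas : ∀ i, Measurable (X i)) :
    ENNReal.ofReal (∫ ω, (collisions X b ω : ℝ) ∂μ)
      = ∫⁻ j, (j : ℝ≥0∞) ∂(μ.map (collisions X b)) := by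
  have hC := measurable_collisions hmeas b
  rw [ofReal_integral_eq_lintegral_ofReal, lintegral_map (measurable_of_countable _) hC]
  · simp
  · refine Integrable.of_bound (by fun_prop) b (ae_of_all _ fun ω => ?_)
    simp [collisions]
  · exact ae_of_all _ fun ω => Nat.cast_nonneg _

theorem unifBins_singleton (c : ℕ) :
    unifBins n {c} = if c ∈ Finset.Icc 1 n then (n : ℝ≥0∞)⁻¹ else 0 := by
  simp [unifBins]

theorem map_pi_eq_smul_sum_dirac [IsProbabilityMeasure μ] (hmeas : ∀ i, Measurable (X i))
    (hindep : iIndepFun X μ) (hunif : ∀ i, μ.map (X i) = unifBins n) :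
    μ.map (fun ω (i : Fin b) => X i ω)
      = ((n : ℝ≥0∞) ^ b)⁻¹ • ∑ y : Fin b → Icc 1 n, Measure.dirac (fun i => (y i : ℕ)) := by
  rw [(iIndepFun_iff_map_fun_eq_pi_map (f := fun i : Fin b => X i)
    fun i => (hmeas i).aemeasurable).mp (hindep.precomp Fin.val_injective)]
  refine Measure.ext_of_singleton fun x => ?_
  rw [Measure.pi_singleton, Measure.smul_apply, Measure.coe_finsetSum, Finset.sum_apply,
    smul_eq_mul]
  simp only [hunif, unifBins_singleton]
  by_cases hx : ∀ i, x i ∈ Icc 1 n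
  · rw [sum_eq_single (fun i => ⟨x i, hx i⟩)]
    · simp [hx, ENNReal.inv_pow]
    · refine fun y _ hy => (Measure.dirac_apply _ _).trans (Set.indicator_of_notMem ?_ _)
      exact fun h => hy (funext fun i => Subtype.ext (congrFun (Set.mem_singleton_iff.mp h) i))
    · simp
  · obtain ⟨i, hi⟩ := not_forall.mp hx
    rw [prod_eq_zero (mem_univ i) (if_neg hi), sum_eq_zero, mul_zero]
    refine fun y _ => (Measure.dirac_apply _ _).trans (Set.indicator_of_notMem (fun h => hi ?_) _)
    rw [← congrFun (Set.mem_singleton_iff.mp h) i]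
    exact (y i).2

theorem map_collisions_eq_collisionLaw [IsProbabilityMeasure μ] (hmeas : ∀ i, Measurable (X i))
    (hindep : iIndepFun X μ) (hunif : ∀ i, μ.map (X i) = unifBins n) :
    μ.map (collisions X b) = collisionLaw (Fin b) (Icc 1 n) := by
  rw [collisions_eq_comp, ← Measure.map_map (measurable_of_countable _)
      (measurable_pi_lambda (fun ω (i : Fin b) => X i ω) fun i => hmeas i),
    map_pi_eq_smul_sum_dirac hmeas hindep hunif, Measure.map_smul,
    Measure.map_finset_sum' (measurable_of_countable _).aemeasurable, collisionLaw]
  simp only [Measure.map_dirac' (measurable_of_countable numCollisions)]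
  congr 1
  · simp
  · exact Fintype.sum_congr _ _ fun y => by
      rw [← numCollisions_comp_of_injective Subtype.val_injective y]
      rfl

end

theorem sizeBiased_apply (L : Measure ℕ) (m : ℝ) (s : Set ℕ) :
    sizeBiased L m s = (∫⁻ j in s, (j : ℝ≥0∞) ∂L) / ENNReal.ofReal m := by
  classical
  rw [sizeBiased, Measure.sum_apply_of_countable, lintegral_countable', div_eq_mul_inv,
    ← ENNReal.tsum_mul_right]
  refine tsum_congr fun k => ?_
  by_cases hk : k ∈ s <;> simp [hk, Measure.restrict_apply, div_eq_mul_inv, mul_right_comm]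

theorem setLIntegral_Iic_le_lintegral_mul (P : Measure ℕ) [IsProbabilityMeasure P] (k : ℕ) :
    ∫⁻ j in Set.Iic k, (j : ℝ≥0∞) ∂P ≤ (∫⁻ j, (j : ℝ≥0∞) ∂P) * P (Set.Iic k) := by
  set I := ∫⁻ j in Set.Iic k, (j : ℝ≥0∞) ∂P
  have hlow : I ≤ k * P (Set.Iic k) := by
    rw [← setLIntegral_const]
    exact setLIntegral_mono' measurableSet_Iic fun j hj => by exact_mod_cast hj
  have hhigh : k * P (Set.Iic k)ᶜ ≤ ∫⁻ j in (Set.Iic k)ᶜ, (j : ℝ≥0∞) ∂P := by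
    rw [← setLIntegral_const]
    exact setLIntegral_mono' measurableSet_Iic.compl fun j (hj : ¬j ≤ k) => by
      exact_mod_cast (not_le.mp hj).le
  calc I = I * (P (Set.Iic k) + P (Set.Iic k)ᶜ) := by
        rw [measure_add_measure_compl measurableSet_Iic, measure_univ, mul_one]
    _ = I * P (Set.Iic k) + I * P (Set.Iic k)ᶜ := mul_add _ _ _
    _ ≤ I * P (Set.Iic k) + k * P (Set.Iic k) * P (Set.Iic k)ᶜ := by gcongr
    _ = I * P (Set.Iic k) + k * P (Set.Iic k)ᶜ * P (Set.Iic k) := by ring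
    _ ≤ I * P (Set.Iic k) + (∫⁻ j in (Set.Iic k)ᶜ, (j : ℝ≥0∞) ∂P) * P (Set.Iic k) := by gcongr
    _ = (∫⁻ j, (j : ℝ≥0∞) ∂P) * P (Set.Iic k) := by
        rw [← add_mul, lintegral_add_compl _ measurableSet_Iic]

section
variable {P : Measure ℕ} {m : ℝ}

theorem sizeBiased_apply_Iic_le [IsProbabilityMeasure P]
    (hm : ENNReal.ofReal m = ∫⁻ j, (j : ℝ≥0∞) ∂P) (k : ℕ) :
    sizeBiased P m (Set.Iic k) ≤ P (Set.Iic k) := by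
  rw [sizeBiased_apply, hm]
  exact ENNReal.div_le_of_le_mul' (setLIntegral_Iic_le_lintegral_mul P k)

theorem le_sizeBiased_apply_Iic (hm : ENNReal.ofReal m = ∫⁻ j, (j : ℝ≥0∞) ∂P) (hm0 : 0 < m)
    {k : ℕ} (h : (∫⁻ j, (j : ℝ≥0∞) ∂P) * P (Set.Iio k) ≤ ∫⁻ j in Set.Iic k, (j : ℝ≥0∞) ∂P) :
    P (Set.Iio k) ≤ sizeBiased P m (Set.Iic k) := by
  rw [sizeBiased_apply, ENNReal.le_div_iff_mul_le (Or.inl (ENNReal.ofReal_pos.mpr hm0).ne')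
    (Or.inl ENNReal.ofReal_ne_top), mul_comm, hm]
  exact h

end

noncomputable def stepCoupling (p q : Measure ℕ) : Measure (ℕ × ℕ) :=
  Measure.sum fun k => (q (Set.Iic k) - p (Set.Iio k)) • Measure.dirac (k, k)
    + (p (Set.Iic k) - q (Set.Iic k)) • Measure.dirac (k, k + 1)

section
variable {p q : Measure ℕ}

theorem stepCoupling_apply (s : Set (ℕ × ℕ)) :
    stepCoupling p q s = ∑' k, ((q (Set.Iic k) - p (Set.Iio k)) * s.indicator 1 (k, k)
      + (p (Set.Iic k) - q (Set.Iic k)) * s.indicator 1 (k, k + 1)) := by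
  simp [stepCoupling, Measure.sum_apply_of_countable]

theorem stepCoupling_apply_eq_zero {s : Set (ℕ × ℕ)} (hs : ∀ k, (k, k) ∉ s ∧ (k, k + 1) ∉ s) :
    stepCoupling p q s = 0 := by
  simp [stepCoupling_apply, hs]

theorem measure_Iic_sub_measure_Iio {k : ℕ} (h : p (Set.Iio k) ≠ ∞) :
    p (Set.Iic k) - p (Set.Iio k) = p {k} := by
  rw [← measure_sdiff Set.Iio_subset_Iic_self measurableSet_Iio.nullMeasurableSet h,
    Set.Iic_sdiff_Iio_same]

variable [IsFiniteMeasure p]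

theorem map_fst_stepCoupling (hqp : ∀ k, q (Set.Iic k) ≤ p (Set.Iic k))
    (hpq : ∀ k, p (Set.Iio k) ≤ q (Set.Iic k)) : (stepCoupling p q).map Prod.fst = p := by
  refine Measure.ext_of_singleton fun k => ?_
  rw [Measure.map_apply measurable_fst (measurableSet_singleton k), stepCoupling_apply,
    tsum_eq_single k fun j hj => by simp [hj]]
  simp only [Set.indicator_of_mem (show (k, k) ∈ Prod.fst ⁻¹' {k} from rfl),
    Set.indicator_of_mem (show (k, k + 1) ∈ Prod.fst ⁻¹' {k} from rfl), Pi.one_apply, mul_one]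
  rw [add_comm, tsub_add_tsub_cancel (hqp k) (hpq k),
    measure_Iic_sub_measure_Iio (measure_ne_top _ _)]

theorem map_snd_stepCoupling (hqp : ∀ k, q (Set.Iic k) ≤ p (Set.Iic k))
    (hpq : ∀ k, p (Set.Iio k) ≤ q (Set.Iic k)) : (stepCoupling p q).map Prod.snd = q := by
  classical
  refine Measure.ext_of_singleton fun k => ?_
  rw [Measure.map_apply measurable_snd (measurableSet_singleton k), stepCoupling_apply]
  simp only [Set.indicator_apply, Set.mem_preimage, Set.mem_singleton_iff, Pi.one_apply, mul_ite,
    mul_one, mul_zero]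
  rw [ENNReal.tsum_add, tsum_ite_eq]
  cases k with
  | zero =>
    have hIic : Set.Iic 0 = ({0} : Set ℕ) := by ext; simp
    simp [hIic]
  | succ j =>
    simp only [Nat.add_right_cancel_iff, tsum_ite_eq]
    have hle : p (Set.Iic j) ≤ q (Set.Iic (j + 1)) := Set.Iio_add_one_eq_Iic j ▸ hpq (j + 1)
    have hfin : q (Set.Iio (j + 1)) ≠ ∞ :=
      Set.Iio_add_one_eq_Iic j ▸ ((hqp j).trans_lt (measure_lt_top _ _)).ne
    rw [Set.Iio_add_one_eq_Iic, tsub_add_tsub_cancel hle (hqp j), ← Set.Iio_add_one_eq_Iic j,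
      measure_Iic_sub_measure_Iio hfin]

end

theorem isProbabilityMeasure_stepCoupling {p q : Measure ℕ} [IsProbabilityMeasure p]
    (hqp : ∀ k, q (Set.Iic k) ≤ p (Set.Iic k)) (hpq : ∀ k, p (Set.Iio k) ≤ q (Set.Iic k)) :
    IsProbabilityMeasure (stepCoupling p q) := by
  have : IsProbabilityMeasure ((stepCoupling p q).map Prod.fst) := by
    rw [map_fst_stepCoupling hqp hpq]
    infer_instance
  exact Measure.isProbabilityMeasure_of_map Prod.fst

end BallsInBins

open BallsInBins

theorem stmt_17_general {Ω : Type*} [MeasurableSpace Ω] (μ : Measure Ω) [IsProbabilityMeasure μ]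
    (n b : ℕ) (hn : 1 ≤ n)
    (X : ℕ → Ω → ℕ) (hmeas : ∀ i, Measurable (X i))
    (hindep : iIndepFun X μ)
    (hunif : ∀ i, μ.map (X i) = unifBins n)
    (m : ℝ) (hm : m = ∫ ω, (collisions X b ω : ℝ) ∂μ) (hmpos : 0 < m) :
    ∃ ν : Measure (ℕ × ℕ), IsProbabilityMeasure ν ∧
      ν.map Prod.fst = μ.map (collisions X b) ∧
      ν.map Prod.snd = sizeBiased (μ.map (collisions X b)) m ∧
      ν {p : ℕ × ℕ | (p.2 : ℤ) - (p.1 : ℤ) ∉ ({0, 1} : Set ℤ)} = 0 := by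
  set p := μ.map (collisions X b)
  have : IsProbabilityMeasure p :=
    Measure.isProbabilityMeasure_map (measurable_collisions hmeas b).aemeasurable
  have : Nonempty (Icc 1 n) := ⟨⟨1, mem_Icc.mpr ⟨le_rfl, hn⟩⟩⟩
  have hE : ENNReal.ofReal m = ∫⁻ j, (j : ℝ≥0∞) ∂p := hm ▸ ofReal_integral_collisions hmeas
  have hqp : ∀ k, sizeBiased p m (Set.Iic k) ≤ p (Set.Iic k) := sizeBiased_apply_Iic_le hE
  have hlaw : p = collisionLaw (Fin b) (Icc 1 n) :=
    map_collisions_eq_collisionLaw hmeas hindep hunif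
  have hpq : ∀ k, p (Set.Iio k) ≤ sizeBiased p m (Set.Iic k) := fun k =>
    le_sizeBiased_apply_Iic hE hmpos (hlaw ▸ lintegral_mul_collisionLaw_Iio_le k)
  exact ⟨stepCoupling p _, isProbabilityMeasure_stepCoupling hqp hpq,
    map_fst_stepCoupling hqp hpq, map_snd_stepCoupling hqp hpq,
    stepCoupling_apply_eq_zero fun k => by simp⟩

theorem stmt_17 {Ω : Type*} [MeasurableSpace Ω] (μ : Measure Ω) [IsProbabilityMeasure μ]
    (n b : ℕ) (hn : 1 ≤ n) (hb : 2 ≤ b)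
    (X : ℕ → Ω → ℕ) (hmeas : ∀ i, Measurable (X i))
    (hindep : iIndepFun X μ)
    (hunif : ∀ i, μ.map (X i) = unifBins n)
    (m : ℝ) (hm : m = ∫ ω, (collisions X b ω : ℝ) ∂μ) (hmpos : 0 < m) :
    ∃ ν : Measure (ℕ × ℕ), IsProbabilityMeasure ν ∧
      ν.map Prod.fst = μ.map (collisions X b) ∧
      ν.map Prod.snd = sizeBiased (μ.map (collisions X b)) m ∧
      ν {p : ℕ × ℕ | (p.2 : ℤ) - (p.1 : ℤ) ∉ ({0, 1} : Set ℤ)} = 0 :=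
  stmt_17_general μ n b hn X hmeas hindep hunif m hm hmpos
end
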